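/- arXiv:2312.11403 — 2 statements merged into one kernel-verified Lean document; each statement's English description precedes it below -/
import Mathlib

section
/- For every finite Y ⊆ Prop and every LTL formula φ: if φ represents Y concisely (i.e., Y ⊆ Prop(φ) and Sz(φ) ≤ 2|Y| − 1), then φ is concise, Prop(φ) = Y, and Sz(φ) = 2|Y| − 1. -/
namespace Temporal

/-- LTL formulas over a set of atomic propositions `P`. -/
inductive LTL (P : Type) : Type where
  | atom : P → LTL P
  | lnot : LTL P → LTL P
  | land : LTL P → LTL P → LTL P
  | lor : LTL P → LTL P → LTL P
  | limp : LTL P → LTL P → LTL P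
  | liff : LTL P → LTL P → LTL P
  | next : LTL P → LTL P
  | fut : LTL P → LTL P
  | glob : LTL P → LTL P
  | untl : LTL P → LTL P → LTL P
  | rel : LTL P → LTL P → LTL P
  | wuntl : LTL P → LTL P → LTL P
  | mrel : LTL P → LTL P → LTL P

variable {P : Type}

/-- Suffix `w[i:]` of an infinite word. -/
def shift (w : ℕ → Set P) (i : ℕ) : ℕ → Set P := fun n => w (n + i)

/-- The constant infinite word `α^ω`. -/
def constW (α : Set P) : ℕ → Set P := fun _ => α

/-- LTL semantics on infinite words. -/
def LTL.Sat : LTL P → (ℕ → Set P) → Prop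
  | .atom p, w => p ∈ w 0
  | .lnot φ, w => ¬ φ.Sat w
  | .land φ ψ, w => φ.Sat w ∧ ψ.Sat w
  | .lor φ ψ, w => φ.Sat w ∨ ψ.Sat w
  | .limp φ ψ, w => ¬ φ.Sat w ∨ ψ.Sat w
  | .liff φ ψ, w => (φ.Sat w ∧ ψ.Sat w) ∨ (¬ φ.Sat w ∧ ¬ ψ.Sat w)
  | .next φ, w => φ.Sat (shift w 1)
  | .fut φ, w => ∃ i, φ.Sat (shift w i)
  | .glob φ, w => ∀ i, φ.Sat (shift w i)
  | .untl φ ψ, w => ∃ i, ψ.Sat (shift w i) ∧ ∀ j < i, φ.Sat (shift w j)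
  | .rel φ ψ, w => ¬ ∃ i, ¬ ψ.Sat (shift w i) ∧ ∀ j < i, ¬ φ.Sat (shift w j)
  | .wuntl φ ψ, w =>
      (∃ i, ψ.Sat (shift w i) ∧ ∀ j < i, φ.Sat (shift w j)) ∨ ∀ i, φ.Sat (shift w i)
  | .mrel φ ψ, w =>
      (¬ ∃ i, ¬ ψ.Sat (shift w i) ∧ ∀ j < i, ¬ φ.Sat (shift w j)) ∧ ∃ i, φ.Sat (shift w i)

/-- The set of subformulas of an LTL formula. -/
def LTL.SubF : LTL P → Set (LTL P)
  | .atom p => {.atom p}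
  | .lnot φ => insert (.lnot φ) φ.SubF
  | .land φ ψ => insert (.land φ ψ) (φ.SubF ∪ ψ.SubF)
  | .lor φ ψ => insert (.lor φ ψ) (φ.SubF ∪ ψ.SubF)
  | .limp φ ψ => insert (.limp φ ψ) (φ.SubF ∪ ψ.SubF)
  | .liff φ ψ => insert (.liff φ ψ) (φ.SubF ∪ ψ.SubF)
  | .next φ => insert (.next φ) φ.SubF
  | .fut φ => insert (.fut φ) φ.SubF
  | .glob φ => insert (.glob φ) φ.SubF
  | .untl φ ψ => insert (.untl φ ψ) (φ.SubF ∪ ψ.SubF)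
  | .rel φ ψ => insert (.rel φ ψ) (φ.SubF ∪ ψ.SubF)
  | .wuntl φ ψ => insert (.wuntl φ ψ) (φ.SubF ∪ ψ.SubF)
  | .mrel φ ψ => insert (.mrel φ ψ) (φ.SubF ∪ ψ.SubF)

/-- The size of an LTL formula: its number of (distinct) subformulas. -/
noncomputable def LTL.Sz (φ : LTL P) : ℕ := φ.SubF.ncard

/-- The set of atomic propositions occurring in a formula. -/
def LTL.props (φ : LTL P) : Set P := {p : P | LTL.atom p ∈ φ.SubF}

/-- A formula is temporal-free if no temporal operator occurs in it. -/
inductive LTL.TemporalFree : LTL P → Prop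
  | atom (p : P) : TemporalFree (.atom p)
  | lnot {φ : LTL P} : TemporalFree φ → TemporalFree (.lnot φ)
  | land {φ ψ : LTL P} : TemporalFree φ → TemporalFree ψ → TemporalFree (.land φ ψ)
  | lor {φ ψ : LTL P} : TemporalFree φ → TemporalFree ψ → TemporalFree (.lor φ ψ)
  | limp {φ ψ : LTL P} : TemporalFree φ → TemporalFree ψ → TemporalFree (.limp φ ψ)
  | liff {φ ψ : LTL P} : TemporalFree φ → TemporalFree ψ → TemporalFree (.liff φ ψ)

/-- Concise formulas: atoms, and binary combinations of concise formulas over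
disjoint sets of propositions. -/
inductive LTL.Concise : LTL P → Prop
  | atom (p : P) : Concise (.atom p)
  | land {φ ψ : LTL P} : Concise φ → Concise ψ → φ.props ∩ ψ.props = ∅ → Concise (.land φ ψ)
  | lor {φ ψ : LTL P} : Concise φ → Concise ψ → φ.props ∩ ψ.props = ∅ → Concise (.lor φ ψ)
  | limp {φ ψ : LTL P} : Concise φ → Concise ψ → φ.props ∩ ψ.props = ∅ → Concise (.limp φ ψ)
  | liff {φ ψ : LTL P} : Concise φ → Concise ψ → φ.props ∩ ψ.props = ∅ → Concise (.liff φ ψ)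
  | untl {φ ψ : LTL P} : Concise φ → Concise ψ → φ.props ∩ ψ.props = ∅ → Concise (.untl φ ψ)
  | rel {φ ψ : LTL P} : Concise φ → Concise ψ → φ.props ∩ ψ.props = ∅ → Concise (.rel φ ψ)
  | wuntl {φ ψ : LTL P} : Concise φ → Concise ψ → φ.props ∩ ψ.props = ∅ → Concise (.wuntl φ ψ)
  | mrel {φ ψ : LTL P} : Concise φ → Concise ψ → φ.props ∩ ψ.props = ∅ → Concise (.mrel φ ψ)

/-- Formulas in which the only binary operator occurring is `∨`. -/
inductive LTL.OnlyOrBin : LTL P → Prop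
  | atom (p : P) : OnlyOrBin (.atom p)
  | lnot {φ : LTL P} : OnlyOrBin φ → OnlyOrBin (.lnot φ)
  | lor {φ ψ : LTL P} : OnlyOrBin φ → OnlyOrBin ψ → OnlyOrBin (.lor φ ψ)
  | next {φ : LTL P} : OnlyOrBin φ → OnlyOrBin (.next φ)
  | fut {φ : LTL P} : OnlyOrBin φ → OnlyOrBin (.fut φ)
  | glob {φ : LTL P} : OnlyOrBin φ → OnlyOrBin (.glob φ)

/-- Formulas that are disjunctions of atomic propositions, built using only `∨`. -/
inductive LTL.OrOfAtoms : LTL P → Prop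
  | atom (p : P) : OrOfAtoms (.atom p)
  | lor {φ ψ : LTL P} : OrOfAtoms φ → OrOfAtoms ψ → OrOfAtoms (.lor φ ψ)

/- ### The 3-SAT reduction.
Variables `x_k` are indexed by `k < m`; the atomic proposition `(k, true)`
represents `x_k` and `(k, false)` represents `x̄_k`. -/

/-- A literal: a variable index together with its polarity. -/
abbrev Lit := ℕ × Bool

/-- A 3-clause. -/
abbrev Clause3 := Lit × Lit × Lit

/-- A literal holds under a valuation. -/
def litSat (v : ℕ → Bool) (l : Lit) : Prop := v l.1 = l.2

/-- A clause holds under a valuation. -/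
def clauseSat (v : ℕ → Bool) (c : Clause3) : Prop :=
  litSat v c.1 ∨ litSat v c.2.1 ∨ litSat v c.2.2

/-- A valuation satisfies a 3-CNF formula (a list of clauses). -/
def cnfSat (v : ℕ → Bool) (Φ : List Clause3) : Prop := ∀ c ∈ Φ, clauseSat v c

/-- All variables of the 3-CNF formula are among `x_0, …, x_{m-1}`. -/
def cnfVars (m : ℕ) (Φ : List Clause3) : Prop :=
  ∀ c ∈ Φ, c.1.1 < m ∧ c.2.1.1 < m ∧ c.2.2.1 < m

/-- The letter `C_i = {l̃₁, l̃₂, l̃₃}` associated with a clause. -/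
def clauseSet (c : Clause3) : Set Lit := {c.1, c.2.1, c.2.2}

/-- The pair `X_k = {x_k, x̄_k}` of propositions associated with variable `x_k`. -/
def rho (k : ℕ) : Set Lit := {(k, true), (k, false)}

/-- The set `𝒫` of positive words of the reduction. -/
def Pos (m : ℕ) (Φ : List Clause3) : Set (ℕ → Set Lit) :=
  {w | (∃ c ∈ Φ, w = constW (clauseSet c)) ∨ ∃ k < m, w = constW (rho k)}

/-- The negative word `η = ∅^ω`. -/
def negWord : ℕ → Set Lit := constW ∅

/-- `φ` separates `𝒫` and `𝒩 = {η}`. -/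
def Separates (m : ℕ) (Φ : List Clause3) (φ : LTL Lit) : Prop :=
  (∀ w ∈ Pos m Φ, φ.Sat w) ∧ ¬ φ.Sat negWord

/-- All propositions of `φ` are among `{x_k, x̄_k : k < m}`. -/
def propsInRange (m : ℕ) (φ : LTL Lit) : Prop := ∀ p ∈ φ.props, p.1 < m

/-- The disjunction `x_0^v ∨ x_1^v ∨ ⋯ ∨ x_{m-1}^v` (for `m ≥ 1`),
where `x_k^v` is the atom `(k, v k)`. -/
def vDisj (v : ℕ → Bool) : ℕ → LTL Lit
  | 0 => .atom (0, v 0)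
  | 1 => .atom (0, v 0)
  | (k + 2) => .lor (vDisj v (k + 1)) (.atom (k + 1, v (k + 1)))

/-- A formula is disjunctive on a set `I` of variable indices. -/
def DisjunctiveOn (I : Set ℕ) (φ : LTL Lit) : Prop :=
  φ.TemporalFree ∧ φ.Concise ∧ φ.OnlyOrBin ∧
    φ.props.ncard = I.ncard ∧ ∀ k ∈ I, (φ.props ∩ rho k).ncard = 1

/-- A formula is `I`-concise for a set `I` of variable indices. -/
def IConciseOn (I : Set ℕ) (φ : LTL Lit) : Prop :=
  φ.Concise ∧ φ.props.ncard = I.ncard ∧ ∀ k ∈ I, (φ.props ∩ rho k).ncard = 1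

/- ### CTL -/

/-- CTL (state) formulas over `P`; a quantified temporal subformula, e.g. `E(φ U ψ)`,
is a single constructor (`Bool` is the path quantifier: `true` = E, `false` = A). -/
inductive CTL (P : Type) : Type where
  | atom : P → CTL P
  | lnot : CTL P → CTL P
  | land : CTL P → CTL P → CTL P
  | lor : CTL P → CTL P → CTL P
  | limp : CTL P → CTL P → CTL P
  | liff : CTL P → CTL P → CTL P
  | qnext : Bool → CTL P → CTL P
  | qfut : Bool → CTL P → CTL P
  | qglob : Bool → CTL P → CTL P
  | quntl : Bool → CTL P → CTL P → CTL P
  | qrel : Bool → CTL P → CTL P → CTL P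
  | qwuntl : Bool → CTL P → CTL P → CTL P
  | qmrel : Bool → CTL P → CTL P → CTL P

/-- A Kripke structure over `P`. -/
structure Kripke (P : Type) where
  S : Type
  I : Set S
  R : S → S → Prop
  total : ∀ s : S, ∃ t : S, R s t
  L : S → Set P

/-- An infinite path of a Kripke structure. -/
def Kripke.IsPath (M : Kripke P) (π : ℕ → M.S) : Prop := ∀ i, M.R (π i) (π (i + 1))

/-- Path quantification: `q = true` is `E` (some path from `s`), `q = false` is `A`. -/
def Kripke.Q (M : Kripke P) (q : Bool) (s : M.S) (pred : (ℕ → M.S) → Prop) : Prop :=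
  if q then ∃ π : ℕ → M.S, M.IsPath π ∧ π 0 = s ∧ pred π
  else ∀ π : ℕ → M.S, M.IsPath π → π 0 = s → pred π

/-- CTL semantics at a state of a Kripke structure. -/
def CTL.Sat (M : Kripke P) : CTL P → M.S → Prop
  | .atom p, s => p ∈ M.L s
  | .lnot φ, s => ¬ φ.Sat M s
  | .land φ ψ, s => φ.Sat M s ∧ ψ.Sat M s
  | .lor φ ψ, s => φ.Sat M s ∨ ψ.Sat M s
  | .limp φ ψ, s => ¬ φ.Sat M s ∨ ψ.Sat M s
  | .liff φ ψ, s => (φ.Sat M s ∧ ψ.Sat M s) ∨ (¬ φ.Sat M s ∧ ¬ ψ.Sat M s)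
  | .qnext q φ, s => M.Q q s fun π => φ.Sat M (π 1)
  | .qfut q φ, s => M.Q q s fun π => ∃ i, φ.Sat M (π i)
  | .qglob q φ, s => M.Q q s fun π => ∀ i, φ.Sat M (π i)
  | .quntl q φ ψ, s => M.Q q s fun π => ∃ i, ψ.Sat M (π i) ∧ ∀ j < i, φ.Sat M (π j)
  | .qrel q φ ψ, s => M.Q q s fun π => ¬ ∃ i, ¬ ψ.Sat M (π i) ∧ ∀ j < i, ¬ φ.Sat M (π j)
  | .qwuntl q φ ψ, s => M.Q q s fun π =>
      (∃ i, ψ.Sat M (π i) ∧ ∀ j < i, φ.Sat M (π j)) ∨ ∀ i, φ.Sat M (π i)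
  | .qmrel q φ ψ, s => M.Q q s fun π =>
      (¬ ∃ i, ¬ ψ.Sat M (π i) ∧ ∀ j < i, ¬ φ.Sat M (π j)) ∧ ∃ i, φ.Sat M (π i)

/-- `M ⊨ φ`: the formula holds at every initial state. -/
def Kripke.Models (M : Kripke P) (φ : CTL P) : Prop := ∀ s ∈ M.I, φ.Sat M s

/-- The set of subformulas of a CTL formula (a quantified temporal subformula counts
as a single subformula together with the subformulas of its arguments). -/
def CTL.SubF : CTL P → Set (CTL P)
  | .atom p => {.atom p}
  | .lnot φ => insert (.lnot φ) φ.SubF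
  | .land φ ψ => insert (.land φ ψ) (φ.SubF ∪ ψ.SubF)
  | .lor φ ψ => insert (.lor φ ψ) (φ.SubF ∪ ψ.SubF)
  | .limp φ ψ => insert (.limp φ ψ) (φ.SubF ∪ ψ.SubF)
  | .liff φ ψ => insert (.liff φ ψ) (φ.SubF ∪ ψ.SubF)
  | .qnext q φ => insert (.qnext q φ) φ.SubF
  | .qfut q φ => insert (.qfut q φ) φ.SubF
  | .qglob q φ => insert (.qglob q φ) φ.SubF
  | .quntl q φ ψ => insert (.quntl q φ ψ) (φ.SubF ∪ ψ.SubF)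
  | .qrel q φ ψ => insert (.qrel q φ ψ) (φ.SubF ∪ ψ.SubF)
  | .qwuntl q φ ψ => insert (.qwuntl q φ ψ) (φ.SubF ∪ ψ.SubF)
  | .qmrel q φ ψ => insert (.qmrel q φ ψ) (φ.SubF ∪ ψ.SubF)

/-- The size of a CTL formula: its number of (distinct) subformulas. -/
noncomputable def CTL.Sz (φ : CTL P) : ℕ := φ.SubF.ncard

/-- `f_{CTL→LTL}`: erase all path quantifiers. -/
def CTL.toLTL : CTL P → LTL P
  | .atom p => .atom p
  | .lnot φ => .lnot φ.toLTL
  | .land φ ψ => .land φ.toLTL ψ.toLTL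
  | .lor φ ψ => .lor φ.toLTL ψ.toLTL
  | .limp φ ψ => .limp φ.toLTL ψ.toLTL
  | .liff φ ψ => .liff φ.toLTL ψ.toLTL
  | .qnext _ φ => .next φ.toLTL
  | .qfut _ φ => .fut φ.toLTL
  | .qglob _ φ => .glob φ.toLTL
  | .quntl _ φ ψ => .untl φ.toLTL ψ.toLTL
  | .qrel _ φ ψ => .rel φ.toLTL ψ.toLTL
  | .qwuntl _ φ ψ => .wuntl φ.toLTL ψ.toLTL
  | .qmrel _ φ ψ => .mrel φ.toLTL ψ.toLTL

/-- `f_{LTL→CTL}`: insert the quantifier `E` before every temporal operator. -/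
def LTL.toCTL : LTL P → CTL P
  | .atom p => .atom p
  | .lnot φ => .lnot φ.toCTL
  | .land φ ψ => .land φ.toCTL ψ.toCTL
  | .lor φ ψ => .lor φ.toCTL ψ.toCTL
  | .limp φ ψ => .limp φ.toCTL ψ.toCTL
  | .liff φ ψ => .liff φ.toCTL ψ.toCTL
  | .next φ => .qnext true φ.toCTL
  | .fut φ => .qfut true φ.toCTL
  | .glob φ => .qglob true φ.toCTL
  | .untl φ ψ => .quntl true φ.toCTL ψ.toCTL
  | .rel φ ψ => .qrel true φ.toCTL ψ.toCTL
  | .wuntl φ ψ => .qwuntl true φ.toCTL ψ.toCTL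
  | .mrel φ ψ => .qmrel true φ.toCTL ψ.toCTL

/-- The one-state Kripke structure `M_{α^ω}`. -/
def singleKripke (α : Set P) : Kripke P where
  S := Unit
  I := Set.univ
  R := fun _ _ => True
  total := fun s => ⟨s, trivial⟩
  L := fun _ => α

/-!
Distinct subformulas are counted, so sharing can only help a formula to be small; still, a
formula with `k` propositions has at least `2k - 1` subformulas. The induction behind this works
relative to a subformula-closed set `T` of formulas already present: if `k` atoms of `φ` are not
in `T`, then `φ` has at least `2k - 1` subformulas outside `T`, and at least `2k` when `φ` also
shares an atom with `T` (at a binary node, the right argument plays the role of `T` for the left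
one). If `Sz φ ≤ 2|Y| - 1` with `Y ⊆ Prop(φ)`, the bound forces `Prop(φ) = Y` and equality,
and equality leaves no room for unary operators nor for binary nodes whose arguments share a
proposition, which is conciseness.
-/

theorem _root_.Set.ncard_union_sdiff_eq {α : Type*} {A B T : Set α} (hA : A.Finite) (hB : B.Finite) :
    ((A ∪ B) \ T).ncard = (B \ T).ncard + (A \ (B ∪ T)).ncard := by
  rw [← Set.ncard_union_eq _ hB.sdiff hA.sdiff]
  · congr 1
    ext x
    simp only [Set.mem_sdiff, Set.mem_union]
    tauto
  · exact Set.disjoint_left.mpr fun x hx hx' => hx'.2 (Or.inl hx.1)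

namespace LTL

variable {P : Type}

theorem sizeOf_le_of_mem_subF {φ ψ : LTL P} (h : ψ ∈ φ.SubF) : sizeOf ψ ≤ sizeOf φ := by
  induction φ with
  | atom p => simp_all [SubF]
  | lnot χ ih | next χ ih | fut χ ih | glob χ ih =>
    simp only [SubF, Set.mem_insert_iff] at h
    rcases h with rfl | h
    · rfl
    · exact (ih h).trans (by simp)
  | land χ₁ χ₂ ih₁ ih₂ | lor χ₁ χ₂ ih₁ ih₂ | limp χ₁ χ₂ ih₁ ih₂ | liff χ₁ χ₂ ih₁ ih₂
  | untl χ₁ χ₂ ih₁ ih₂ | rel χ₁ χ₂ ih₁ ih₂ | wuntl χ₁ χ₂ ih₁ ih₂ | mrel χ₁ χ₂ ih₁ ih₂ =>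
    simp only [SubF, Set.mem_insert_iff, Set.mem_union] at h
    rcases h with rfl | h | h
    · rfl
    · exact (ih₁ h).trans (by simp; omega)
    · exact (ih₂ h).trans (by simp)

theorem notMem_subF_of_sizeOf_lt {φ χ : LTL P} (h : sizeOf χ < sizeOf φ) : φ ∉ χ.SubF :=
  fun hφ => (sizeOf_le_of_mem_subF hφ).not_gt h

theorem induction_on_shape {motive : LTL P → Prop} (φ : LTL P)
    (atom : ∀ p, motive (.atom p))
    (unary : ∀ φ χ, φ.SubF = insert φ χ.SubF → φ.props = χ.props → φ ∉ χ.SubF →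
      motive χ → motive φ)
    (binary : ∀ φ χ₁ χ₂, φ.SubF = insert φ (χ₁.SubF ∪ χ₂.SubF) →
      φ.props = χ₁.props ∪ χ₂.props → φ ∉ χ₁.SubF → φ ∉ χ₂.SubF →
      (χ₁.Concise → χ₂.Concise → Disjoint χ₁.props χ₂.props → φ.Concise) →
      motive χ₁ → motive χ₂ → motive φ) :
    motive φ := by
  induction φ with
  | atom p => exact atom p
  | lnot χ ih | next χ ih | fut χ ih | glob χ ih =>
    exact unary _ χ rfl (Set.ext fun q => by simp [props, SubF])
      (notMem_subF_of_sizeOf_lt (by simp)) ih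
  | land χ₁ χ₂ ih₁ ih₂ | lor χ₁ χ₂ ih₁ ih₂ | limp χ₁ χ₂ ih₁ ih₂ | liff χ₁ χ₂ ih₁ ih₂
  | untl χ₁ χ₂ ih₁ ih₂ | rel χ₁ χ₂ ih₁ ih₂ | wuntl χ₁ χ₂ ih₁ ih₂ | mrel χ₁ χ₂ ih₁ ih₂ =>
    refine binary _ χ₁ χ₂ rfl (Set.ext fun q => by simp [props, SubF])
      (notMem_subF_of_sizeOf_lt (by simp; omega)) (notMem_subF_of_sizeOf_lt (by simp))
      (fun h₁ h₂ hd => ?_) ih₁ ih₂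
    constructor <;> first | assumption | exact Set.disjoint_iff_inter_eq_empty.mp hd

theorem mem_subF_self (φ : LTL P) : φ ∈ φ.SubF := by
  cases φ <;> simp [SubF]

theorem subF_finite (φ : LTL P) : φ.SubF.Finite := by
  induction φ using induction_on_shape with
  | atom p => exact Set.finite_singleton _
  | unary φ χ hS _ _ ih => rw [hS]; exact ih.insert φ
  | binary φ χ₁ χ₂ hS _ _ _ _ ih₁ ih₂ => rw [hS]; exact (ih₁.union ih₂).insert φ

theorem props_finite (φ : LTL P) : φ.props.Finite :=
  (subF_finite φ).preimage fun _ _ _ _ => atom.inj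

theorem props_nonempty (φ : LTL P) : φ.props.Nonempty := by
  induction φ using induction_on_shape with
  | atom p => exact ⟨p, mem_subF_self _⟩
  | unary φ χ _ hP _ ih => rwa [hP]
  | binary φ χ₁ χ₂ _ hP _ _ _ ih₁ _ => rw [hP]; exact ih₁.mono Set.subset_union_left

theorem subF_subset_of_mem {φ ψ : LTL P} (h : ψ ∈ φ.SubF) : ψ.SubF ⊆ φ.SubF := by
  induction φ using induction_on_shape with
  | atom p => rw [Set.eq_of_mem_singleton h]
  | unary φ χ hS _ _ ih =>
    rw [hS] at h ⊢
    rcases h with rfl | h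
    · rw [hS]
    · exact (ih h).trans (Set.subset_insert _ _)
  | binary φ χ₁ χ₂ hS _ _ _ _ ih₁ ih₂ =>
    rw [hS] at h ⊢
    rcases h with rfl | h | h
    · rw [hS]
    · exact (ih₁ h).trans (Set.subset_union_left.trans (Set.subset_insert _ _))
    · exact (ih₂ h).trans (Set.subset_union_right.trans (Set.subset_insert _ _))

theorem props_subset_of_mem {φ ψ : LTL P} (h : ψ ∈ φ.SubF) : ψ.props ⊆ φ.props :=
  fun _ hp => subF_subset_of_mem h hp

theorem disjoint_subF_of_disjoint_props {φ ψ : LTL P} (h : Disjoint φ.props ψ.props) :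
    Disjoint φ.SubF ψ.SubF :=
  Set.disjoint_left.mpr fun χ hφ hψ =>
    let ⟨_, hp⟩ := props_nonempty χ
    Set.disjoint_left.mp h (props_subset_of_mem hφ hp) (props_subset_of_mem hψ hp)

def atoms (T : Set (LTL P)) : Set P := {p | atom p ∈ T}

def SubFClosed (T : Set (LTL P)) : Prop := ∀ χ ∈ T, χ.SubF ⊆ T

theorem SubFClosed.subF_union {T : Set (LTL P)} (hT : SubFClosed T) (φ : LTL P) :
    SubFClosed (φ.SubF ∪ T) := by
  rintro χ (h | h)
  · exact (subF_subset_of_mem h).trans Set.subset_union_left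
  · exact (hT χ h).trans Set.subset_union_right

theorem ncard_insert_sdiff {φ : LTL P} {S T : Set (LTL P)} (hS : S.Finite) (hφS : φ ∉ S)
    (hφT : φ ∉ T) : (insert φ S \ T).ncard = (S \ T).ncard + 1 := by
  rw [Set.insert_sdiff_of_notMem _ hφT]
  exact Set.ncard_insert_of_notMem (fun h => hφS h.1) hS.sdiff

theorem props_sdiff_atoms_eq_empty {φ : LTL P} {T : Set (LTL P)} (hT : SubFClosed T)
    (hφT : φ ∈ T) : φ.props \ atoms T = ∅ :=
  Set.sdiff_eq_empty.mpr fun _ hp => hT φ hφT hp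

theorem two_mul_ncard_props_sdiff_atoms_le (φ : LTL P) {T : Set (LTL P)} (hT : SubFClosed T) :
    2 * (φ.props \ atoms T).ncard ≤ (φ.SubF \ T).ncard + 1 ∧
      (¬ Disjoint φ.props (atoms T) →
        2 * (φ.props \ atoms T).ncard ≤ (φ.SubF \ T).ncard) := by
  induction φ using induction_on_shape generalizing T with
  | atom p =>
    by_cases hφT : atom p ∈ T
    · simp [props_sdiff_atoms_eq_empty hT hφT]
    have hpT : p ∉ atoms T := hφT
    have hP : (atom p).props = {p} := Set.ext fun q => by simp [props, SubF]
    have hS : (atom p).SubF \ T = {atom p} := by simpa [SubF] using hφT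
    have hdisj : Disjoint {p} (atoms T) := Set.disjoint_singleton_left.mpr hpT
    rw [hP, hS, sdiff_eq_left.mpr hdisj]
    exact ⟨by simp, fun h => (h hdisj).elim⟩
  | unary φ χ hS hP hφχ ih =>
    by_cases hφT : φ ∈ T
    · simp [props_sdiff_atoms_eq_empty hT hφT]
    rw [hS, hP, ncard_insert_sdiff (subF_finite χ) hφχ hφT]
    have := (ih hT).1
    exact ⟨by omega, fun _ => by omega⟩
  | binary φ χ₁ χ₂ hS hP hφ₁ hφ₂ _ ih₁ ih₂ =>
    by_cases hφT : φ ∈ T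
    · simp [props_sdiff_atoms_eq_empty hT hφT]
    obtain ⟨h₂, h₂'⟩ := ih₂ hT
    obtain ⟨h₁, h₁'⟩ := ih₁ (hT.subF_union χ₂)
    have hA : atoms (χ₂.SubF ∪ T) = χ₂.props ∪ atoms T := rfl
    rw [hS, hP, ncard_insert_sdiff ((subF_finite χ₁).union (subF_finite χ₂))
        (fun h => h.elim hφ₁ hφ₂) hφT,
      Set.ncard_union_sdiff_eq (subF_finite χ₁) (subF_finite χ₂),
      Set.ncard_union_sdiff_eq (props_finite χ₁) (props_finite χ₂)]
    rw [hA] at h₁ h₁'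
    refine ⟨by omega, fun h => ?_⟩
    by_cases hd₂ : Disjoint χ₂.props (atoms T)
    · have hd₁ : ¬ Disjoint χ₁.props (χ₂.props ∪ atoms T) := fun hd₁ =>
        h (Set.disjoint_union_left.mpr ⟨hd₁.mono_right Set.subset_union_right, hd₂⟩)
      have := h₁' hd₁
      omega
    · have := h₂' hd₂
      omega

theorem sz_pos (φ : LTL P) : 0 < φ.Sz :=
  (Set.ncard_pos (subF_finite φ)).mpr ⟨φ, mem_subF_self φ⟩

theorem two_mul_ncard_props_le_sz (φ : LTL P) : 2 * φ.props.ncard ≤ φ.Sz + 1 := by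
  simpa [atoms, Sz] using (two_mul_ncard_props_sdiff_atoms_le φ (T := ∅) (by simp [SubFClosed])).1

theorem two_mul_ncard_props_union_le {χ₁ χ₂ : LTL P} (h : ¬ Disjoint χ₁.props χ₂.props) :
    2 * (χ₁.props ∪ χ₂.props).ncard ≤ (χ₁.SubF ∪ χ₂.SubF).ncard + 1 := by
  have h₁ : 2 * (χ₁.props \ χ₂.props).ncard ≤ (χ₁.SubF \ χ₂.SubF).ncard :=
    (two_mul_ncard_props_sdiff_atoms_le χ₁ (T := χ₂.SubF) fun _ => subF_subset_of_mem).2 h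
  have h₂ := two_mul_ncard_props_le_sz χ₂
  rw [← Set.ncard_sdiff_add_ncard _ _ (props_finite χ₁) (props_finite χ₂),
    ← Set.ncard_sdiff_add_ncard _ _ (subF_finite χ₁) (subF_finite χ₂)]
  unfold Sz at h₂
  omega

theorem concise_of_sz_lt (φ : LTL P) (h : φ.Sz < 2 * φ.props.ncard) : φ.Concise := by
  induction φ using induction_on_shape with
  | atom p => exact .atom p
  | unary φ χ hS hP hφχ _ =>
    have hSz : φ.Sz = χ.Sz + 1 := by
      rw [Sz, hS, Set.ncard_insert_of_notMem hφχ (subF_finite χ), Sz]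
    have := two_mul_ncard_props_le_sz χ
    rw [hP] at h
    omega
  | binary φ χ₁ χ₂ hS hP hφ₁ hφ₂ hC ih₁ ih₂ =>
    have hSz : φ.Sz = (χ₁.SubF ∪ χ₂.SubF).ncard + 1 := by
      rw [Sz, hS, Set.ncard_insert_of_notMem (fun h => h.elim hφ₁ hφ₂)
        ((subF_finite χ₁).union (subF_finite χ₂))]
    have hd : Disjoint χ₁.props χ₂.props := by
      by_contra hd
      have := two_mul_ncard_props_union_le hd
      rw [hP] at h
      omega
    have hSz' : φ.Sz = χ₁.Sz + χ₂.Sz + 1 := by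
      rw [hSz, Set.ncard_union_eq (disjoint_subF_of_disjoint_props hd) (subF_finite χ₁)
        (subF_finite χ₂), Sz, Sz]
    have hcard : φ.props.ncard = χ₁.props.ncard + χ₂.props.ncard := by
      rw [hP, Set.ncard_union_eq hd (props_finite χ₁) (props_finite χ₂)]
    have := two_mul_ncard_props_le_sz χ₁
    have := two_mul_ncard_props_le_sz χ₂
    exact hC (ih₁ (by omega)) (ih₂ (by omega)) hd

end LTL

theorem concise_of_represents_concisely_general (P : Type) (Y : Set P)
    (φ : LTL P) (hsub : Y ⊆ φ.props) (hsz : φ.Sz ≤ 2 * Y.ncard - 1) :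
    φ.Concise ∧ φ.props = Y ∧ φ.Sz = 2 * Y.ncard - 1 := by
  have hlower := φ.two_mul_ncard_props_le_sz
  have hpos := φ.sz_pos
  have hcard : Y.ncard ≤ φ.props.ncard := Set.ncard_le_ncard hsub φ.props_finite
  have hprops : φ.props = Y :=
    (Set.eq_of_subset_of_ncard_le hsub (by omega) φ.props_finite).symm
  exact ⟨φ.concise_of_sz_lt (by omega), hprops, by omega⟩

/-- a formula representing `Y` concisely is concise, has `Prop(φ) = Y`,
and has size exactly `2|Y| - 1`. -/
theorem concise_of_represents_concisely (P : Type) (Y : Set P) (hY : Y.Finite)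
    (φ : LTL P) (hsub : Y ⊆ φ.props) (hsz : φ.Sz ≤ 2 * Y.ncard - 1) :
    φ.Concise ∧ φ.props = Y ∧ φ.Sz = 2 * Y.ncard - 1 :=
  concise_of_represents_concisely_general P Y φ hsub hsz

end Temporal
end

section
/- Let φ be a temporal-free LTL formula that is {1,…,m}-concise, accepts every word of 𝒫 and rejects η. Then φ implies a disjunction on {1,…,m}: there exists a formula φ' disjunctive on {1,…,m} such that for every α ⊆ Prop, if α^ω ⊨ φ then α^ω ⊨ φ'. -/
namespace Temporal

variable {P : Type}

/-! ### Auxiliary lemmas -/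

@[simp] lemma props_atom (p : P) : (LTL.atom p).props = {p} := by
  ext q; simp [LTL.props, LTL.SubF]

@[simp] lemma props_lnot (φ : LTL P) : (LTL.lnot φ).props = φ.props := by
  ext q; simp [LTL.props, LTL.SubF]

@[simp] lemma props_land (φ ψ : LTL P) : (LTL.land φ ψ).props = φ.props ∪ ψ.props := by
  ext q; simp [LTL.props, LTL.SubF]

@[simp] lemma props_lor (φ ψ : LTL P) : (LTL.lor φ ψ).props = φ.props ∪ ψ.props := by
  ext q; simp [LTL.props, LTL.SubF]

@[simp] lemma props_limp (φ ψ : LTL P) : (LTL.limp φ ψ).props = φ.props ∪ ψ.props := by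
  ext q; simp [LTL.props, LTL.SubF]

@[simp] lemma props_liff (φ ψ : LTL P) : (LTL.liff φ ψ).props = φ.props ∪ ψ.props := by
  ext q; simp [LTL.props, LTL.SubF]

lemma subF_finite (φ : LTL P) : φ.SubF.Finite := by
  induction φ <;> unfold LTL.SubF <;>
    apply_rules [Set.Finite.insert, Set.Finite.union, Set.finite_singleton]

lemma props_finite (φ : LTL P) : φ.props.Finite := by
  have : φ.props = LTL.atom ⁻¹' φ.SubF := rfl
  rw [this]
  exact (subF_finite φ).preimage (Set.injOn_of_injective (fun a b h => by cases h; rfl))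

lemma concise_props_nonempty {φ : LTL P} (h : φ.Concise) : φ.props.Nonempty := by
  induction h with
  | atom p => exact ⟨p, by simp⟩
  | land _ _ _ ih1 _ => obtain ⟨p, hp⟩ := ih1; exact ⟨p, by simp [hp]⟩
  | lor _ _ _ ih1 _ => obtain ⟨p, hp⟩ := ih1; exact ⟨p, by simp [hp]⟩
  | limp _ _ _ ih1 _ => obtain ⟨p, hp⟩ := ih1; exact ⟨p, by simp [hp]⟩
  | liff _ _ _ ih1 _ => obtain ⟨p, hp⟩ := ih1; exact ⟨p, by simp [hp]⟩
  | untl _ _ _ ih1 _ =>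
      obtain ⟨p, hp⟩ := ih1
      exact ⟨p, by simp [LTL.props, LTL.SubF] at hp ⊢; exact Or.inl hp⟩
  | rel _ _ _ ih1 _ =>
      obtain ⟨p, hp⟩ := ih1
      exact ⟨p, by simp [LTL.props, LTL.SubF] at hp ⊢; exact Or.inl hp⟩
  | wuntl _ _ _ ih1 _ =>
      obtain ⟨p, hp⟩ := ih1
      exact ⟨p, by simp [LTL.props, LTL.SubF] at hp ⊢; exact Or.inl hp⟩
  | mrel _ _ _ ih1 _ =>
      obtain ⟨p, hp⟩ := ih1
      exact ⟨p, by simp [LTL.props, LTL.SubF] at hp ⊢; exact Or.inl hp⟩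

/-- For a temporal-free formula, satisfaction on a constant word only depends on the
intersection of the letter with the propositions of the formula. -/
lemma sat_congr {φ : LTL P} (htf : φ.TemporalFree) :
    ∀ {α β : Set P}, (∀ p ∈ φ.props, (p ∈ α ↔ p ∈ β)) →
      (φ.Sat (constW α) ↔ φ.Sat (constW β)) := by
  induction htf with
  | atom p => intro α β h; simpa [LTL.Sat, constW] using h p (by simp)
  | lnot _ ih =>
      intro α β h
      simp only [LTL.Sat]
      exact not_congr (ih fun p hp => h p (by simpa using hp))
  | land _ _ ih1 ih2 =>
      intro α β h
      simp only [LTL.Sat]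
      exact and_congr (ih1 fun p hp => h p (by simp [hp])) (ih2 fun p hp => h p (by simp [hp]))
  | lor _ _ ih1 ih2 =>
      intro α β h
      simp only [LTL.Sat]
      exact or_congr (ih1 fun p hp => h p (by simp [hp])) (ih2 fun p hp => h p (by simp [hp]))
  | limp _ _ ih1 ih2 =>
      intro α β h
      simp only [LTL.Sat]
      exact or_congr (not_congr (ih1 fun p hp => h p (by simp [hp])))
        (ih2 fun p hp => h p (by simp [hp]))
  | liff _ _ ih1 ih2 =>
      intro α β h
      simp only [LTL.Sat]
      have e1 := ih1 fun p hp => h p (by simp [hp])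
      have e2 := ih2 fun p hp => h p (by simp [hp])
      exact or_congr (and_congr e1 e2) (and_congr (not_congr e1) (not_congr e2))

/-! ### Properties of `vDisj` -/

lemma vDisj_props (v : ℕ → Bool) : ∀ n, (vDisj v (n + 1)).props = (fun k => (k, v k)) '' Set.Iio (n + 1)
  | 0 => by
      ext p
      simp [vDisj, Nat.lt_one_iff]
  | n + 1 => by
      have ih := vDisj_props v n
      show (LTL.lor (vDisj v (n + 1)) (.atom (n + 1, v (n + 1)))).props = _
      rw [props_lor, ih, props_atom]
      ext p
      constructor
      · rintro (⟨k, hk, rfl⟩ | hp)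
        · exact ⟨k, by simp only [Set.mem_Iio] at hk ⊢; omega, rfl⟩
        · exact ⟨n + 1, by simp only [Set.mem_Iio]; omega, hp.symm⟩
      · rintro ⟨k, hk, rfl⟩
        rcases Nat.lt_or_ge k (n + 1) with h | h
        · exact Or.inl ⟨k, h, rfl⟩
        · have : k = n + 1 := by simp at hk; omega
          subst this; exact Or.inr rfl

lemma vDisj_tf (v : ℕ → Bool) : ∀ n, (vDisj v (n + 1)).TemporalFree
  | 0 => LTL.TemporalFree.atom _
  | n + 1 => LTL.TemporalFree.lor (vDisj_tf v n) (LTL.TemporalFree.atom _)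

lemma vDisj_oob (v : ℕ → Bool) : ∀ n, (vDisj v (n + 1)).OnlyOrBin
  | 0 => LTL.OnlyOrBin.atom _
  | n + 1 => LTL.OnlyOrBin.lor (vDisj_oob v n) (LTL.OnlyOrBin.atom _)

lemma vDisj_concise (v : ℕ → Bool) : ∀ n, (vDisj v (n + 1)).Concise
  | 0 => LTL.Concise.atom _
  | n + 1 => by
      refine LTL.Concise.lor (vDisj_concise v n) (LTL.Concise.atom _) ?_
      rw [vDisj_props, props_atom]
      ext p
      simp only [Set.mem_inter_iff, Set.mem_image, Set.mem_singleton_iff, Set.mem_empty_iff_false,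
        iff_false, not_and]
      rintro ⟨k, hk, rfl⟩ h
      simp at hk
      have : k = n + 1 := congrArg Prod.fst h
      omega

lemma vDisj_sat (v : ℕ → Bool) (α : Set Lit) :
    ∀ n, ((vDisj v (n + 1)).Sat (constW α) ↔ ∃ k < n + 1, (k, v k) ∈ α)
  | 0 => by
      simp [vDisj, LTL.Sat, constW, Nat.lt_one_iff]
  | n + 1 => by
      have ih := vDisj_sat v α n
      show (LTL.lor (vDisj v (n + 1)) (.atom (n + 1, v (n + 1)))).Sat (constW α) ↔ _
      simp only [LTL.Sat, ih]
      constructor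
      · rintro (⟨k, hk, hm⟩ | hm)
        · exact ⟨k, by omega, hm⟩
        · exact ⟨n + 1, by omega, hm⟩
      · rintro ⟨k, hk, hm⟩
        rcases Nat.lt_or_ge k (n + 1) with h | h
        · exact Or.inl ⟨k, h, hm⟩
        · have : k = n + 1 := by omega
          subst this; exact Or.inr hm

lemma ncard_Iio (m : ℕ) : (Set.Iio m).ncard = m := by
  have h : Set.Iio m = ↑(Finset.range m) := by ext x; simp
  rw [h, Set.ncard_coe_finset, Finset.card_range]

/-- a temporal-free, `{1,…,m}`-concise formula accepting every word of
`𝒫` and rejecting `η` implies a disjunction on `{1,…,m}`. -/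
theorem implies_disjunction (m : ℕ) (Φ : List Clause3) (hvars : cnfVars m Φ)
    (φ : LTL Lit) (htf : φ.TemporalFree) (hc : IConciseOn (Set.Iio m) φ)
    (hacc : ∀ w ∈ Pos m Φ, φ.Sat w) (hrej : ¬ φ.Sat negWord) :
    ∃ φ' : LTL Lit, DisjunctiveOn (Set.Iio m) φ' ∧
      ∀ α : Set Lit, (∀ p ∈ α, p.1 < m) →
        φ.Sat (constW α) → φ'.Sat (constW α) := by
  obtain ⟨hcon, hncard, hinter⟩ := hc
  rw [ncard_Iio] at hncard
  rcases Nat.eq_zero_or_pos m with rfl | hm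
  · exfalso
    obtain ⟨p, hp⟩ := concise_props_nonempty hcon
    have h0 : φ.props = ∅ := (Set.ncard_eq_zero (props_finite φ)).mp hncard
    simp [h0] at hp
  -- choose the unique proposition in each pair `X_k`
  have h1 : ∀ k : ℕ, ∃ p : Lit, k < m → φ.props ∩ rho k = {p} := by
    intro k
    rcases Nat.lt_or_ge k m with hk | hk
    · obtain ⟨p, hp⟩ := Set.ncard_eq_one.mp (hinter k hk)
      exact ⟨p, fun _ => hp⟩
    · exact ⟨(0, true), fun h => absurd h (by omega)⟩
  choose f hf using h1
  set v : ℕ → Bool := fun k => (f k).2 with hv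
  have hfk : ∀ k < m, f k = (k, v k) := by
    intro k hk
    have : f k ∈ φ.props ∩ rho k := by rw [hf k hk]; rfl
    have hr : f k ∈ rho k := this.2
    have hr' : f k = (k, true) ∨ f k = (k, false) := hr
    rcases hr' with h | h <;> simp [hv, h]
  have hmem : ∀ k < m, (k, v k) ∈ φ.props := by
    intro k hk
    have : f k ∈ φ.props ∩ rho k := by rw [hf k hk]; rfl
    rw [hfk k hk] at this
    exact this.1
  -- identify `φ.props` with the image of `Iio m`
  have hinj : Function.Injective (fun k : ℕ => (k, v k)) := by
    intro a b h
    exact congrArg Prod.fst h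
  have himcard : ((fun k : ℕ => (k, v k)) '' Set.Iio m).ncard = m := by
    rw [Set.ncard_image_of_injective _ hinj, ncard_Iio]
  have hprops : φ.props = (fun k : ℕ => (k, v k)) '' Set.Iio m := by
    refine (Set.eq_of_subset_of_ncard_le ?_ ?_ (props_finite φ)).symm
    · rintro p ⟨k, hk, rfl⟩
      exact hmem k hk
    · rw [himcard, hncard]
  obtain ⟨n, rfl⟩ : ∃ n, m = n + 1 := ⟨m - 1, by omega⟩
  refine ⟨vDisj v (n + 1), ⟨vDisj_tf v n, vDisj_concise v n, vDisj_oob v n, ?_, ?_⟩, ?_⟩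
  · rw [vDisj_props, himcard, ncard_Iio]
  · intro k hk
    have : (vDisj v (n + 1)).props ∩ rho k = {(k, v k)} := by
      rw [vDisj_props]
      ext p
      simp only [Set.mem_inter_iff, Set.mem_image, Set.mem_singleton_iff]
      constructor
      · rintro ⟨⟨j, hj, rfl⟩, hr⟩
        rcases hr with h | h <;>
          · have : j = k := congrArg Prod.fst h
            subst this; rfl
      · rintro rfl
        refine ⟨⟨k, hk, rfl⟩, ?_⟩
        cases hb : v k <;> simp [rho, hb]
    rw [this, Set.ncard_singleton]
  · intro α _ hsat
    rw [vDisj_sat]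
    by_contra hno
    push_neg at hno
    apply hrej
    have : φ.Sat (constW α) ↔ φ.Sat (constW (∅ : Set Lit)) := by
      refine sat_congr htf ?_
      intro p hp
      rw [hprops] at hp
      obtain ⟨k, hk, rfl⟩ := hp
      simp only [Set.mem_Iio] at hk
      simp [hno k hk]
    exact this.mp hsat


end Temporal
end
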